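/- Let G be a finite group acting on a finite set Ω, let Ω₁, …, Ω_t be the orbits and K_i the kernel of the action of G on Ω_i. Suppose for each i there are disjoint subsets Γ_i, Δ_i ⊆ Ω_i with π_{≥m_i}(G/K_i) = π_{≥m_i}(|G : G_{Γ_i} ∩ G_{Δ_i}|), where m_i = m(G/K_i). Then, setting Γ = ⋃Γ_i, Δ = ⋃Δ_i, and m = m(G) where G is viewed as a permutation group on Ω (so ⋂K_i = 1), the sets Γ and Δ are disjoint and π_{≥m}(G) ⊆ π_{≥m}(|G : G_Γ ∩ G_Δ|). -/
import Mathlib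

open MulAction Pointwise

/-- `mSec G` is the largest integer `m ≥ 5` such that `G` has a section `H/K`
isomorphic to the alternating group `A_m`, and `0` if no such section exists. -/
noncomputable def mSec (G : Type) [Group G] : ℕ :=
  sSup {m | 5 ≤ m ∧ ∃ (H : Subgroup G) (K : Subgroup H), ∃ hn : K.Normal,
    Nonempty (letI := hn; (H ⧸ K) ≃* alternatingGroup (Fin m))}

/-- `π_{≥ m}(n)`: the set of prime divisors of `n` that are at least `m`. -/
def piGE (m n : ℕ) : Set ℕ := {p | p.Prime ∧ p ∣ n ∧ m ≤ p}

/-- The kernel of the action of `G` on a subset `s ⊆ Ω`, i.e. the pointwise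
stabilizer of `s`. -/
noncomputable def setKernel (G : Type) [Group G] {Ω : Type} [MulAction G Ω]
    (s : Set Ω) : Subgroup G :=
  ⨅ x ∈ s, MulAction.stabilizer G x

/-- The pointwise stabilizer of an orbit is a normal subgroup. -/
instance setKernel_orbit_normal (G : Type) [Group G] {Ω : Type} [MulAction G Ω]
    (o : MulAction.orbitRel.Quotient G Ω) : (setKernel G o.orbit).Normal := by
  constructor
  intro g hg c
  simp only [setKernel, Subgroup.mem_iInf, MulAction.mem_stabilizer_iff] at hg ⊢
  intro x hx
  have h1 : c⁻¹ • x ∈ o.orbit := by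
    rw [MulAction.orbitRel.Quotient.mem_orbit] at hx ⊢
    rw [← hx]
    exact Quotient.sound ⟨c⁻¹, rfl⟩
  have h2 := hg _ h1
  have : (c * g * c⁻¹) • x = c • g • c⁻¹ • x := by
    simp [mul_smul]
  rw [this, h2, smul_inv_smul]

/-- The defining set of `mSec`. -/
def mSecSet (G : Type) [Group G] : Set ℕ :=
  {m | 5 ≤ m ∧ ∃ (H : Subgroup G) (K : Subgroup H), ∃ hn : K.Normal,
    Nonempty (letI := hn; (H ⧸ K) ≃* alternatingGroup (Fin m))}

lemma mSec_eq_sSup (G : Type) [Group G] : mSec G = sSup (mSecSet G) := rfl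

lemma m_le_card_of_mem (G : Type) [Group G] [Finite G] {m : ℕ}
    (hm : m ∈ mSecSet G) : m ≤ Nat.card G := by
  obtain ⟨h5, H, K, hn, ⟨e⟩⟩ := hm
  letI := hn
  haveI : Nontrivial (Fin m) := Fin.nontrivial_iff_two_le.2 (by omega)
  have hA : 2 * Fintype.card (alternatingGroup (Fin m)) = m.factorial := by
    rw [two_mul_card_alternatingGroup, Fintype.card_perm, Fintype.card_fin]
  have h2m : 2 * m ≤ m.factorial := by
    have h1 : m.factorial = m * (m - 1).factorial := by
      have : m = (m - 1) + 1 := by omega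
      rw [this, Nat.factorial_succ]
      congr 2
    have h2 : 2 ≤ (m - 1).factorial :=
      le_trans (by omega) (Nat.self_le_factorial (m - 1))
    calc 2 * m = m * 2 := by ring
    _ ≤ m * (m - 1).factorial := Nat.mul_le_mul_left m h2
    _ = m.factorial := h1.symm
  have hmA : m ≤ Fintype.card (alternatingGroup (Fin m)) := by omega
  have h1 : Nat.card (alternatingGroup (Fin m)) = Nat.card (H ⧸ K) :=
    Nat.card_congr e.symm.toEquiv
  have h2 : Nat.card (H ⧸ K) ∣ Nat.card H := Subgroup.card_quotient_dvd_card K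
  have h3 : Nat.card H ∣ Nat.card G := Subgroup.card_subgroup_dvd_card H
  have h4 : Nat.card (alternatingGroup (Fin m)) ∣ Nat.card G :=
    h1 ▸ h2.trans h3
  have h5' : Nat.card (alternatingGroup (Fin m)) ≤ Nat.card G :=
    Nat.le_of_dvd Nat.card_pos h4
  rw [Nat.card_eq_fintype_card] at h5'
  omega

lemma mSecSet_quotient_subset (G : Type) [Group G] (N : Subgroup G) [hN : N.Normal] :
    mSecSet (G ⧸ N) ⊆ mSecSet G := by
  rintro m ⟨h5, H, K, hn, ⟨e⟩⟩
  letI := hn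
  refine ⟨h5, H.comap (QuotientGroup.mk' N), ?_⟩
  set π := QuotientGroup.mk' N
  set H' := H.comap π with hH'
  let g : H' →* H := (π.comp H'.subtype).codRestrict H (fun x => x.2)
  have hg : Function.Surjective g := by
    intro h
    obtain ⟨a, ha⟩ := QuotientGroup.mk'_surjective N (h : G ⧸ N)
    refine ⟨⟨a, ?_⟩, ?_⟩
    · rw [Subgroup.mem_comap]
      show π a ∈ H
      rw [ha]
      exact h.2
    · exact Subtype.ext ha
  let f : H' →* alternatingGroup (Fin m) :=
    e.toMonoidHom.comp ((QuotientGroup.mk' K).comp g)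
  have hf : Function.Surjective f :=
    e.surjective.comp ((QuotientGroup.mk'_surjective K).comp hg)
  exact ⟨f.ker, inferInstance,
    ⟨QuotientGroup.quotientKerEquivOfSurjective f hf⟩⟩

lemma mSec_quotient_le (G : Type) [Group G] [Finite G] (N : Subgroup G) [N.Normal] :
    mSec (G ⧸ N) ≤ mSec G := by
  rw [mSec_eq_sSup, mSec_eq_sSup]
  rcases Set.eq_empty_or_nonempty (mSecSet (G ⧸ N)) with h | h
  · rw [h, csSup_empty]
    exact bot_le
  · exact csSup_le_csSup ⟨Nat.card G, fun m hm => m_le_card_of_mem G hm⟩ h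
      (mSecSet_quotient_subset G N)

lemma smul_quotient_orbit_eq {G Ω : Type} [Group G] [MulAction G Ω]
    (o : MulAction.orbitRel.Quotient G Ω) (g : G) : g • o.orbit = o.orbit := by
  ext x
  rw [Set.mem_smul_set_iff_inv_smul_mem, MulAction.orbitRel.Quotient.mem_orbit,
    MulAction.orbitRel.Quotient.mem_orbit]
  have : (Quotient.mk'' (g⁻¹ • x) : MulAction.orbitRel.Quotient G Ω)
      = Quotient.mk'' x := Quotient.sound ⟨g⁻¹, rfl⟩
  rw [this]

/-- If, on each orbit `Ωᵢ` (with kernel `Kᵢ` and `mᵢ = m(G/Kᵢ)`), there are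
disjoint subsets `Γᵢ, Δᵢ ⊆ Ωᵢ` with
`π_{≥mᵢ}(G/Kᵢ) = π_{≥mᵢ}(|G : G_{Γᵢ} ∩ G_{Δᵢ}|)`, then for `Γ = ⋃ Γᵢ`,
`Δ = ⋃ Δᵢ` and `m = m(G)` (the action being faithful), `Γ` and `Δ` are
disjoint and `π_{≥m}(G) ⊆ π_{≥m}(|G : G_Γ ∩ G_Δ|)`. -/
theorem piGE_subset_of_orbitwise (G Ω : Type) [Group G] [Finite G] [Finite Ω]
    [MulAction G Ω] (hfaith : ∀ g : G, (∀ x : Ω, g • x = x) → g = 1)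
    (Γi Δi : MulAction.orbitRel.Quotient G Ω → Set Ω)
    (hΓ : ∀ o, Γi o ⊆ o.orbit) (hΔ : ∀ o, Δi o ⊆ o.orbit)
    (hdisj : ∀ o, Disjoint (Γi o) (Δi o))
    (hcov : ∀ o : MulAction.orbitRel.Quotient G Ω,
      piGE (mSec (G ⧸ setKernel G o.orbit)) (Nat.card (G ⧸ setKernel G o.orbit)) =
      piGE (mSec (G ⧸ setKernel G o.orbit))
        ((MulAction.stabilizer G (Γi o) ⊓ MulAction.stabilizer G (Δi o)).index)) :
    Disjoint (⋃ o, Γi o) (⋃ o, Δi o) ∧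
    piGE (mSec G) (Nat.card G) ⊆
      piGE (mSec G)
        ((MulAction.stabilizer G (⋃ o, Γi o) ⊓
          MulAction.stabilizer G (⋃ o, Δi o)).index) := by
  haveI : Fintype (MulAction.orbitRel.Quotient G Ω) := Fintype.ofFinite _
  -- membership in two orbits forces equality of orbits
  have horb : ∀ (o o' : MulAction.orbitRel.Quotient G Ω) (x : Ω),
      x ∈ o.orbit → x ∈ o'.orbit → o = o' := by
    intro o o' x h h'
    rw [MulAction.orbitRel.Quotient.mem_orbit] at h h'
    rw [← h, ← h']
  constructor
  · rw [Set.disjoint_left]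
    rintro x hx hx'
    obtain ⟨o, ho⟩ := Set.mem_iUnion.1 hx
    obtain ⟨o', ho'⟩ := Set.mem_iUnion.1 hx'
    have : o = o' := horb o o' x (hΓ o ho) (hΔ o' ho')
    subst this
    exact Set.disjoint_left.1 (hdisj o) ho ho'
  · intro p hp
    obtain ⟨hprime, hdvd, hm⟩ := hp
    -- G embeds into the product of the G ⧸ K_o
    let φ : G →* (∀ o : MulAction.orbitRel.Quotient G Ω, G ⧸ setKernel G o.orbit) :=
      MonoidHom.mk' (fun g o => QuotientGroup.mk g) (fun a b => by
        funext o; rfl)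
    have hφ : Function.Injective φ := by
      rw [injective_iff_map_eq_one]
      intro g hg
      apply hfaith
      intro x
      have h1 := congrFun hg (Quotient.mk'' x)
      have h2 : g ∈ setKernel G (MulAction.orbitRel.Quotient.orbit
          (Quotient.mk'' x : MulAction.orbitRel.Quotient G Ω)) :=
        (QuotientGroup.eq_one_iff g).1 h1
      simp only [setKernel, Subgroup.mem_iInf, MulAction.mem_stabilizer_iff] at h2
      exact h2 x (by rw [MulAction.orbitRel.Quotient.mem_orbit])
    have hcard : Nat.card G ∣
        ∏ o : MulAction.orbitRel.Quotient G Ω, Nat.card (G ⧸ setKernel G o.orbit) := by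
      rw [← Nat.card_pi]
      exact Subgroup.card_dvd_of_injective φ hφ
    obtain ⟨o, _, hpo⟩ := hprime.prime.exists_mem_finset_dvd (hdvd.trans hcard)
    -- apply the hypothesis on orbit o
    have hmo : mSec (G ⧸ setKernel G o.orbit) ≤ mSec G := mSec_quotient_le G _
    have h1 : p ∈ piGE (mSec (G ⧸ setKernel G o.orbit))
        (Nat.card (G ⧸ setKernel G o.orbit)) := ⟨hprime, hpo, hmo.trans hm⟩
    rw [hcov o] at h1
    obtain ⟨-, hdvd', -⟩ := h1
    -- the global stabilizer is contained in the orbitwise one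
    have keyΓ : Γi o = (⋃ o', Γi o') ∩ o.orbit := by
      ext x
      constructor
      · intro h
        exact ⟨Set.mem_iUnion.2 ⟨o, h⟩, hΓ o h⟩
      · rintro ⟨h1, h2⟩
        obtain ⟨o', ho'⟩ := Set.mem_iUnion.1 h1
        have := horb o' o x (hΓ o' ho') h2
        exact this ▸ ho'
    have keyΔ : Δi o = (⋃ o', Δi o') ∩ o.orbit := by
      ext x
      constructor
      · intro h
        exact ⟨Set.mem_iUnion.2 ⟨o, h⟩, hΔ o h⟩
      · rintro ⟨h1, h2⟩
        obtain ⟨o', ho'⟩ := Set.mem_iUnion.1 h1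
        have := horb o' o x (hΔ o' ho') h2
        exact this ▸ ho'
    have hle : MulAction.stabilizer G (⋃ o', Γi o') ⊓
        MulAction.stabilizer G (⋃ o', Δi o') ≤
        MulAction.stabilizer G (Γi o) ⊓ MulAction.stabilizer G (Δi o) := by
      intro g hg
      rw [Subgroup.mem_inf] at hg
      obtain ⟨hg1, hg2⟩ := hg
      rw [MulAction.mem_stabilizer_iff] at hg1 hg2
      rw [Subgroup.mem_inf]
      constructor <;> rw [MulAction.mem_stabilizer_iff]
      · rw [keyΓ, Set.smul_set_inter, hg1, smul_quotient_orbit_eq]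
      · rw [keyΔ, Set.smul_set_inter, hg2, smul_quotient_orbit_eq]
    exact ⟨hprime, hdvd'.trans (Subgroup.index_dvd_of_le hle), hm⟩
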